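/- Let n ≥ 1, R > 0 and 0 < a < 1. Let μ_i (i ∈ ℕ) and μ be finite Borel measures on ℝ^{n+1} all supported in the closed ball of radius R centered at the origin, with μ ≠ 0. If μ_i converges weakly to μ, then the local entropies on the unbounded scale interval converge: λ^{[a,∞)}(μ_i) → λ^{[a,∞)}(μ) as i → ∞. -/

import Mathlib

/-!
For a measure `ν` supported in the ball of radius `R`, `F_{0,1}(ν)` is at least
`(4π)^{-n/2} e^{-R²/4} ν(ℝ^{n+1})`, while `F_{x₀,t}(ν) ≤ (4πt)^{-n/2} ν(ℝ^{n+1})` is below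
that for `t ≥ T`, and for `a ≤ t ≤ T`, `‖x₀‖ ≥ M` the Gaussian factor pushes `F_{x₀,t}(ν)`
below it too. With `M`, `T` depending only on `n`, `R`, `a`, every such entropy is therefore the
supremum of `F` over the compact set `Q = {‖x₀‖ ≤ M, a ≤ t ≤ T}`. Since all supports lie in
one compact set, weak convergence gives convergence of the integrals of all continuous functions,
hence pointwise convergence of `(x₀, t) ↦ F_{x₀,t}(μ_i)`; joint continuity of the heat kernel and
bounded masses make this family equicontinuous on `Q`, so by Ascoli the convergence is uniform
on `Q`, and uniform convergence passes to suprema.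
-/

open MeasureTheory Metric Set Filter

/-- The F-functional `F_{x₀,t₀}(μ) = (4π t₀)^{-n/2} ∫ exp(-‖x-x₀‖²/(4t₀)) dμ(x)`. -/
noncomputable def Ffn (n : ℕ) (μ : Measure (EuclideanSpace ℝ (Fin (n + 1))))
    (x₀ : EuclideanSpace ℝ (Fin (n + 1))) (t₀ : ℝ) : ℝ :=
  (4 * Real.pi * t₀) ^ (-(n : ℝ) / 2) *
    ∫ x, Real.exp (-‖x - x₀‖ ^ 2 / (4 * t₀)) ∂μ

/-- The local entropy `λ^I(μ) = sup {F_{x₀,t₀}(μ) : x₀ ∈ ℝ^{n+1}, t₀ ∈ I}`. -/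
noncomputable def localEntropyR (n : ℕ) (I : Set ℝ)
    (μ : Measure (EuclideanSpace ℝ (Fin (n + 1)))) : ℝ :=
  ⨆ (x₀ : EuclideanSpace ℝ (Fin (n + 1))) (t₀ : I), Ffn n μ x₀ (t₀ : ℝ)

open Topology Real

section General

variable {X : Type*} [TopologicalSpace X]

lemma tendsto_integral_of_measure_compl_eq_zero [T2Space X] [LocallyCompactSpace X]
    [MeasurableSpace X] {K : Set X} (hK : IsCompact K) {ι : Type*} {l : Filter ι}
    {μs : ι → Measure X} {μ : Measure X}
    (hsupp_i : ∀ i, μs i Kᶜ = 0) (hsupp : μ Kᶜ = 0)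
    (hconv : ∀ g : X → ℝ, Continuous g → HasCompactSupport g →
      Tendsto (fun i => ∫ x, g x ∂(μs i)) l (𝓝 (∫ x, g x ∂μ)))
    {g : X → ℝ} (hg : Continuous g) :
    Tendsto (fun i => ∫ x, g x ∂(μs i)) l (𝓝 (∫ x, g x ∂μ)) := by
  obtain ⟨χ, hχK, -, hχ, -⟩ :=
    exists_continuous_one_zero_of_isCompact hK isClosed_empty (disjoint_empty K)
  have hcut : ∀ ν : Measure X, ν Kᶜ = 0 → ∫ x, χ x * g x ∂ν = ∫ x, g x ∂ν := fun ν hs =>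
    integral_congr_ae <| by filter_upwards [mem_ae_iff.2 hs] with x hx using by simp [hχK hx]
  have := hconv (fun x => χ x * g x) (χ.continuous.mul hg) hχ.mul_right
  simpa only [hcut _ (hsupp_i _), hcut μ hsupp] using this

lemma equicontinuousOn_integral {Y ι : Type*} [TopologicalSpace Y] [MeasurableSpace Y]
    {G : X → Y → ℝ} {Q : Set X} {K : Set Y} (hK : IsCompact K)
    (hG : ContinuousOn (Function.uncurry G) (Q ×ˢ K))
    {μs : ι → Measure Y} [∀ i, IsFiniteMeasure (μs i)] (hsupp : ∀ i, μs i Kᶜ = 0)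
    (hint : ∀ p ∈ Q, ∀ i, Integrable (G p) (μs i)) {C : ℝ} (hC : ∀ i, (μs i).real univ ≤ C) :
    EquicontinuousOn (fun i p => ∫ x, G p x ∂(μs i)) Q := by
  intro p₀ hp₀
  rw [Metric.uniformity_basis_dist.equicontinuousWithinAt_iff_right]
  intro ε hε
  obtain ⟨η, hη, hηC⟩ := exists_pos_mul_lt hε C
  obtain ⟨v, hv, hGv⟩ := hK.mem_uniformity_of_prod hG hp₀ (dist_mem_uniformity hη)
  filter_upwards [hv, self_mem_nhdsWithin] with p hpv hpQ i
  rw [dist_eq_norm, ← integral_sub (hint p₀ hp₀ i) (hint p hpQ i)]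
  calc ‖∫ x, G p₀ x - G p x ∂(μs i)‖ ≤ η * (μs i).real univ :=
        norm_integral_le_of_norm_le_const <| by
          filter_upwards [mem_ae_iff.2 (hsupp i)] with x hx
          rw [← dist_eq_norm, dist_comm]
          exact (hGv p hpv x hx).le
    _ ≤ η * C := by gcongr; exact hC i
    _ = C * η := mul_comm _ _
    _ < ε := hηC

lemma tendstoUniformlyOn_of_equicontinuousOn {α ι : Type*} [UniformSpace α]
    {F : ι → X → α} {f : X → α} {l : Filter ι} {K : Set X} (hK : IsCompact K)
    (hF : EquicontinuousOn F K) (h : ∀ x ∈ K, Tendsto (F · x) l (𝓝 (f x))) :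
    TendstoUniformlyOn F f l K := by
  have := (EquicontinuousOn.tendsto_uniformOnFun_iff_pi' (𝔖 := {K}) (by simpa using hK)
    (by simpa using hF) l f).2 ?_
  · exact (UniformOnFun.tendsto_iff_tendstoUniformlyOn.1 this) K rfl
  · rw [sUnion_singleton, tendsto_pi_nhds]
    exact fun x => h x x.2

lemma abs_ciSup_sub_ciSup_le {ι : Sort*} [Nonempty ι] {f g : ι → ℝ} {ε : ℝ}
    (hf : BddAbove (range f)) (hg : BddAbove (range g)) (h : ∀ i, |f i - g i| ≤ ε) :
    |(⨆ i, f i) - ⨆ i, g i| ≤ ε := by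
  rw [abs_sub_le_iff]
  constructor
  · have : (⨆ i, f i) ≤ (⨆ i, g i) + ε :=
      ciSup_le fun i => by linarith [(abs_sub_le_iff.1 (h i)).1, le_ciSup hg i]
    linarith
  · have : (⨆ i, g i) ≤ (⨆ i, f i) + ε :=
      ciSup_le fun i => by linarith [(abs_sub_le_iff.1 (h i)).2, le_ciSup hf i]
    linarith

lemma TendstoUniformly.tendsto_ciSup {ι κ : Type*} [Nonempty κ] {l : Filter ι}
    {F : ι → κ → ℝ} {f : κ → ℝ} (hF : ∀ i, BddAbove (range (F i)))
    (hf : BddAbove (range f)) (h : TendstoUniformly F f l) :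
    Tendsto (fun i => ⨆ k, F i k) l (𝓝 (⨆ k, f k)) := by
  rw [Metric.tendsto_nhds]
  intro ε hε
  filter_upwards [Metric.tendstoUniformly_iff.1 h (ε / 2) (half_pos hε)] with i hi
  rw [Real.dist_eq]
  calc |(⨆ k, F i k) - ⨆ k, f k| ≤ ε / 2 :=
        abs_ciSup_sub_ciSup_le (hF i) hf fun k => by
          rw [← Real.dist_eq, dist_comm]; exact (hi k).le
    _ < ε := half_lt_self hε

end General

section HeatKernel

variable {n : ℕ}

local notation "E" => EuclideanSpace ℝ (Fin (n + 1))

noncomputable def heatKernel (n : ℕ) (p : EuclideanSpace ℝ (Fin (n + 1)) × ℝ)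
    (x : EuclideanSpace ℝ (Fin (n + 1))) : ℝ :=
  (4 * π * p.2) ^ (-(n : ℝ) / 2) * exp (-‖x - p.1‖ ^ 2 / (4 * p.2))

lemma Ffn_eq_integral_heatKernel (ν : Measure E) (p : E × ℝ) :
    Ffn n ν p.1 p.2 = ∫ x, heatKernel n p x ∂ν := by
  rw [Ffn, ← integral_const_mul]
  rfl

lemma continuous_heatKernel (p : E × ℝ) : Continuous (heatKernel n p) := by
  unfold heatKernel
  fun_prop

lemma continuousOn_heatKernel :
    ContinuousOn (Function.uncurry (heatKernel n)) {q | 0 < q.1.2} := by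
  intro q (hq : 0 < q.1.2)
  have : ContinuousAt (fun q : (E × ℝ) × E =>
      (4 * π * q.1.2) ^ (-(n : ℝ) / 2) * exp (-‖q.2 - q.1.1‖ ^ 2 / (4 * q.1.2))) q := by
    fun_prop (disch := first | positivity | exact Or.inl (by positivity))
  exact this.continuousWithinAt

lemma exp_neg_norm_sub_sq_div_le_one (x x₀ : E) {t : ℝ} (ht : 0 ≤ t) :
    exp (-‖x - x₀‖ ^ 2 / (4 * t)) ≤ 1 :=
  exp_le_one_iff.2 <| div_nonpos_of_nonpos_of_nonneg (by simp only [neg_nonpos]; positivity)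
    (by positivity)

lemma integrable_exp_neg_norm_sub_sq_div (ν : Measure E) [IsFiniteMeasure ν] (x₀ : E)
    {t : ℝ} (ht : 0 ≤ t) : Integrable (fun x => exp (-‖x - x₀‖ ^ 2 / (4 * t))) ν :=
  (integrable_const 1).mono' (by fun_prop : Continuous _).aestronglyMeasurable <|
    ae_of_all _ fun x => by
      rw [norm_of_nonneg (exp_pos _).le]
      exact exp_neg_norm_sub_sq_div_le_one x x₀ ht

lemma integrable_heatKernel (ν : Measure E) [IsFiniteMeasure ν] {p : E × ℝ} (hp : 0 ≤ p.2) :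
    Integrable (heatKernel n p) ν :=
  (integrable_exp_neg_norm_sub_sq_div ν p.1 hp).const_mul _

lemma rpow_four_pi_mul_le {s t : ℝ} (hs : 0 < s) (hst : s ≤ t) :
    (4 * π * t) ^ (-(n : ℝ) / 2) ≤ (4 * π * s) ^ (-(n : ℝ) / 2) :=
  rpow_le_rpow_of_nonpos (by positivity) (by gcongr)
    (div_nonpos_of_nonpos_of_nonneg (by simp) zero_le_two)

lemma Ffn_le_of_ae_le (ν : Measure E) [IsFiniteMeasure ν] {x₀ : E} {t η : ℝ} (ht : 0 < t)
    (h : ∀ᵐ x ∂ν, exp (-‖x - x₀‖ ^ 2 / (4 * t)) ≤ η) :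
    Ffn n ν x₀ t ≤ (4 * π * t) ^ (-(n : ℝ) / 2) * (η * ν.real univ) := by
  rw [Ffn]
  gcongr
  refine (le_abs_self _).trans ?_
  rw [← Real.norm_eq_abs]
  refine norm_integral_le_of_norm_le_const ?_
  filter_upwards [h] with x hx
  rwa [norm_of_nonneg (exp_pos _).le]

lemma le_Ffn_of_ae_le (ν : Measure E) [IsFiniteMeasure ν] {x₀ : E} {t η : ℝ} (ht : 0 < t)
    (h : ∀ᵐ x ∂ν, η ≤ exp (-‖x - x₀‖ ^ 2 / (4 * t))) :
    (4 * π * t) ^ (-(n : ℝ) / 2) * (η * ν.real univ) ≤ Ffn n ν x₀ t := by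
  rw [Ffn]
  gcongr
  calc η * ν.real univ = ∫ _, η ∂ν := by rw [integral_const, smul_eq_mul, mul_comm]
    _ ≤ _ := integral_mono_ae (integrable_const η)
      (integrable_exp_neg_norm_sub_sq_div ν x₀ ht.le) h

lemma Ffn_le_of_le (ν : Measure E) [IsFiniteMeasure ν] (x₀ : E) {s t : ℝ} (hs : 0 < s)
    (hst : s ≤ t) : Ffn n ν x₀ t ≤ (4 * π * s) ^ (-(n : ℝ) / 2) * ν.real univ := by
  have ht := hs.trans_le hst
  calc Ffn n ν x₀ t ≤ (4 * π * t) ^ (-(n : ℝ) / 2) * (1 * ν.real univ) :=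
        Ffn_le_of_ae_le ν ht (ae_of_all _ fun x => exp_neg_norm_sub_sq_div_le_one x x₀ ht.le)
    _ ≤ (4 * π * s) ^ (-(n : ℝ) / 2) * ν.real univ := by
        rw [one_mul]
        exact mul_le_mul_of_nonneg_right (rpow_four_pi_mul_le hs hst) measureReal_nonneg

lemma ae_norm_le_of_measure_compl_closedBall (ν : Measure E) {R : ℝ}
    (hs : ν (closedBall 0 R)ᶜ = 0) : ∀ᵐ x ∂ν, ‖x‖ ≤ R := by
  filter_upwards [mem_ae_iff.2 hs] with x hx
  rwa [mem_closedBall_zero_iff] at hx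

lemma le_Ffn_zero_one (ν : Measure E) [IsFiniteMeasure ν] {R : ℝ}
    (hs : ν (closedBall 0 R)ᶜ = 0) :
    (4 * π * 1) ^ (-(n : ℝ) / 2) * exp (-R ^ 2 / (4 * 1)) * ν.real univ ≤ Ffn n ν 0 1 := by
  rw [mul_assoc]
  refine le_Ffn_of_ae_le ν one_pos ?_
  filter_upwards [ae_norm_le_of_measure_compl_closedBall ν hs] with x hx
  rw [sub_zero]
  gcongr

lemma Ffn_le_of_le_norm (ν : Measure E) [IsFiniteMeasure ν] {R M a t T : ℝ} {x₀ : E}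
    (hs : ν (closedBall 0 R)ᶜ = 0) (hRM : R ≤ M) (hM : M ≤ ‖x₀‖)
    (ha : 0 < a) (hat : a ≤ t) (htT : t ≤ T) :
    Ffn n ν x₀ t ≤ (4 * π * a) ^ (-(n : ℝ) / 2) * exp (-(M - R) ^ 2 / (4 * T)) * ν.real univ := by
  have ht := ha.trans_le hat
  calc Ffn n ν x₀ t
      ≤ (4 * π * t) ^ (-(n : ℝ) / 2) * (exp (-(M - R) ^ 2 / (4 * T)) * ν.real univ) := by
        refine Ffn_le_of_ae_le ν ht ?_
        filter_upwards [ae_norm_le_of_measure_compl_closedBall ν hs] with x hx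
        have hdist : M - R ≤ ‖x - x₀‖ := by
          linarith [norm_sub_norm_le x₀ x, norm_sub_rev x₀ x]
        rw [exp_le_exp, neg_div, neg_div, neg_le_neg_iff]
        gcongr
    _ ≤ _ := (mul_le_mul_of_nonneg_right (rpow_four_pi_mul_le ha hat)
          (mul_nonneg (exp_pos _).le measureReal_nonneg)).trans_eq (mul_assoc _ _ _).symm

lemma eventually_rpow_four_pi_mul_le (hn : 1 ≤ n) {β : ℝ} (hβ : 0 < β) :
    ∀ᶠ T in atTop, (4 * π * T) ^ (-(n : ℝ) / 2) ≤ β := by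
  have hexp : 0 < (n : ℝ) / 2 := by
    have : (1 : ℝ) ≤ n := by exact_mod_cast hn
    linarith
  have h : Tendsto (fun T : ℝ => (4 * π * T) ^ (-(n : ℝ) / 2)) atTop (𝓝 0) := by
    simpa only [neg_div, Function.comp_def, id] using
      (tendsto_rpow_neg_atTop hexp).comp (tendsto_id.const_mul_atTop (by positivity))
  exact h.eventually (ge_mem_nhds hβ)

lemma eventually_mul_exp_neg_sub_sq_div_le (c R : ℝ) {T β : ℝ} (hT : 0 < T) (hβ : 0 < β) :
    ∀ᶠ M in atTop, c * exp (-(M - R) ^ 2 / (4 * T)) ≤ β := by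
  have h : Tendsto (fun M : ℝ => -(M - R) ^ 2 / (4 * T)) atTop atBot := by
    simp only [neg_div]
    exact tendsto_neg_atTop_atBot.comp <|
      ((tendsto_pow_atTop two_ne_zero).comp (tendsto_atTop_add_const_right _ (-R) tendsto_id)
        ).atTop_div_const (by positivity)
  have hlim := (tendsto_exp_atBot.comp h).const_mul c
  rw [mul_zero] at hlim
  exact hlim.eventually (ge_mem_nhds hβ)

lemma exists_Ffn_le_Ffn_zero_one (hn : 1 ≤ n) {a : ℝ} (ha : 0 < a) (R : ℝ) :
    ∃ M T : ℝ, 0 ≤ M ∧ 1 ≤ T ∧ ∀ (ν : Measure E) [IsFiniteMeasure ν],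
      ν (closedBall 0 R)ᶜ = 0 → ∀ x₀ t, a ≤ t → ¬(‖x₀‖ ≤ M ∧ t ≤ T) →
        Ffn n ν x₀ t ≤ Ffn n ν 0 1 := by
  set β := (4 * π * 1) ^ (-(n : ℝ) / 2) * exp (-R ^ 2 / (4 * 1))
  have hβ : 0 < β := by positivity
  obtain ⟨T, hT1, hTβ⟩ :=
    ((eventually_ge_atTop 1).and (eventually_rpow_four_pi_mul_le hn hβ)).exists
  obtain ⟨M, ⟨hM0, hRM⟩, hMβ⟩ := (((eventually_ge_atTop 0).and (eventually_ge_atTop R)).and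
    (eventually_mul_exp_neg_sub_sq_div_le ((4 * π * a) ^ (-(n : ℝ) / 2)) R
      (by linarith : (0 : ℝ) < T) hβ)).exists
  refine ⟨M, T, hM0, hT1, fun ν _ hs x₀ t hat hfar => (le_Ffn_zero_one ν hs).trans' ?_⟩
  by_cases htT : t ≤ T
  · have hM : M ≤ ‖x₀‖ := (not_le.1 fun h => hfar ⟨h, htT⟩).le
    exact (Ffn_le_of_le_norm ν hs hRM hM ha hat htT).trans
      (mul_le_mul_of_nonneg_right hMβ measureReal_nonneg)
  · exact (Ffn_le_of_le ν x₀ (by linarith) (not_le.1 htT).le).trans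
      (mul_le_mul_of_nonneg_right hTβ measureReal_nonneg)

lemma bddAbove_range_Ffn (ν : Measure E) [IsFiniteMeasure ν] {a : ℝ} (ha : 0 < a)
    {Q : Set (E × ℝ)} (hQ : ∀ p ∈ Q, a ≤ p.2) :
    BddAbove (range fun p : Q => Ffn n ν p.1.1 p.1.2) :=
  ⟨_, forall_mem_range.2 fun p => Ffn_le_of_le ν _ ha (hQ p p.2)⟩

lemma localEntropyR_Ici_eq_ciSup (ν : Measure E) [IsFiniteMeasure ν] {a : ℝ} (ha : 0 < a)
    {Q : Set (E × ℝ)} (hQ : ∀ p ∈ Q, a ≤ p.2) {p₀ : E × ℝ} (hp₀ : p₀ ∈ Q)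
    (hle : ∀ x₀ t, a ≤ t → (x₀, t) ∉ Q → Ffn n ν x₀ t ≤ Ffn n ν p₀.1 p₀.2) :
    localEntropyR n (Ici a) ν = ⨆ p : Q, Ffn n ν p.1.1 p.1.2 := by
  have : Nonempty Q := ⟨⟨p₀, hp₀⟩⟩
  have : Nonempty (Ici a) := nonempty_Ici.to_subtype
  have hB (x₀ : E) (t : Ici a) : Ffn n ν x₀ t ≤ (4 * π * a) ^ (-(n : ℝ) / 2) * ν.real univ :=
    Ffn_le_of_le ν x₀ ha t.2
  have hQbdd := bddAbove_range_Ffn ν ha hQ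
  refine le_antisymm (ciSup_le fun x₀ => ciSup_le fun t => ?_) (ciSup_le fun p => ?_)
  · by_cases ht : (x₀, (t : ℝ)) ∈ Q
    · exact le_ciSup hQbdd ⟨_, ht⟩
    · exact (hle x₀ t t.2 ht).trans (le_ciSup hQbdd ⟨p₀, hp₀⟩)
  · exact (le_ciSup ⟨_, forall_mem_range.2 (hB p.1.1)⟩ ⟨p.1.2, hQ p p.2⟩).trans
      (le_ciSup (f := fun x₀ => ⨆ t : Ici a, Ffn n ν x₀ t)
        ⟨_, forall_mem_range.2 fun x₀ => ciSup_le (hB x₀)⟩ p.1.1)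

lemma tendstoUniformlyOn_Ffn {R : ℝ} {μs : ℕ → Measure E} {μ : Measure E}
    [∀ i, IsFiniteMeasure (μs i)]
    (hsupp_i : ∀ i, μs i (closedBall 0 R)ᶜ = 0) (hsupp : μ (closedBall 0 R)ᶜ = 0)
    (hconv : ∀ g : E → ℝ, Continuous g → HasCompactSupport g →
      Tendsto (fun i => ∫ x, g x ∂(μs i)) atTop (𝓝 (∫ x, g x ∂μ)))
    {Q : Set (E × ℝ)} (hQ : IsCompact Q) (hQpos : ∀ p ∈ Q, 0 < p.2) :
    TendstoUniformlyOn (fun i (p : E × ℝ) => Ffn n (μs i) p.1 p.2) (fun p => Ffn n μ p.1 p.2)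
      atTop Q := by
  have hK := isCompact_closedBall (0 : E) R
  have hlim {g : E → ℝ} (hg : Continuous g) :
      Tendsto (fun i => ∫ x, g x ∂(μs i)) atTop (𝓝 (∫ x, g x ∂μ)) :=
    tendsto_integral_of_measure_compl_eq_zero hK hsupp_i hsupp hconv hg
  have hmass : Tendsto (fun i => (μs i).real univ) atTop (𝓝 (μ.real univ)) := by
    simpa using hlim (continuous_const (y := (1 : ℝ)))
  obtain ⟨C, hC⟩ := hmass.bddAbove_range
  simp only [Ffn_eq_integral_heatKernel]
  exact tendstoUniformlyOn_of_equicontinuousOn hQ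
    (equicontinuousOn_integral hK (continuousOn_heatKernel.mono fun q hq => hQpos _ hq.1)
      hsupp_i (fun p hp _ => integrable_heatKernel _ (hQpos p hp).le) fun i => hC ⟨i, rfl⟩)
    fun p _ => hlim (continuous_heatKernel p)

end HeatKernel

theorem stmt_12_general (n : ℕ) (hn : 1 ≤ n) (R : ℝ) (a : ℝ) (ha : 0 < a) (ha1 : a < 1)
    (μs : ℕ → Measure (EuclideanSpace ℝ (Fin (n + 1))))
    (μ : Measure (EuclideanSpace ℝ (Fin (n + 1))))
    [∀ i, IsFiniteMeasure (μs i)] [IsFiniteMeasure μ]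
    (hsupp_i : ∀ i, μs i (closedBall (0 : EuclideanSpace ℝ (Fin (n + 1))) R)ᶜ = 0)
    (hsupp : μ (closedBall (0 : EuclideanSpace ℝ (Fin (n + 1))) R)ᶜ = 0)
    (hconv : ∀ g : EuclideanSpace ℝ (Fin (n + 1)) → ℝ, Continuous g → HasCompactSupport g →
      Tendsto (fun i => ∫ x, g x ∂(μs i)) atTop (nhds (∫ x, g x ∂μ))) :
    Tendsto (fun i => localEntropyR n (Ici a) (μs i)) atTop
      (nhds (localEntropyR n (Ici a) μ)) := by
  obtain ⟨M, T, hM, hT, hfar⟩ := exists_Ffn_le_Ffn_zero_one hn ha R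
  set Q := closedBall (0 : EuclideanSpace ℝ (Fin (n + 1))) M ×ˢ Icc a T
  have hQa : ∀ p ∈ Q, a ≤ p.2 := fun p hp => hp.2.1
  have h01 : ((0 : EuclideanSpace ℝ (Fin (n + 1))), (1 : ℝ)) ∈ Q :=
    ⟨mem_closedBall_self hM, ha1.le, hT⟩
  have hentropy (ν : Measure (EuclideanSpace ℝ (Fin (n + 1)))) [IsFiniteMeasure ν]
      (hs : ν (closedBall 0 R)ᶜ = 0) :
      localEntropyR n (Ici a) ν = ⨆ p : Q, Ffn n ν p.1.1 p.1.2 :=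
    localEntropyR_Ici_eq_ciSup ν ha hQa h01
      fun x₀ t hat hx => hfar ν hs x₀ t hat fun h => hx ⟨mem_closedBall_zero_iff.2 h.1, hat, h.2⟩
  have hunif := tendstoUniformlyOn_Ffn hsupp_i hsupp hconv
    ((isCompact_closedBall _ _).prod isCompact_Icc) fun p hp => ha.trans_le (hQa p hp)
  have : Nonempty Q := ⟨⟨_, h01⟩⟩
  simp only [hentropy _ (hsupp_i _), hentropy μ hsupp]
  exact (tendstoUniformlyOn_iff_tendstoUniformly_comp_coe.1 hunif).tendsto_ciSup
    (fun i => bddAbove_range_Ffn _ ha hQa) (bddAbove_range_Ffn _ ha hQa)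

theorem stmt_12 (n : ℕ) (hn : 1 ≤ n) (R : ℝ) (hR : 0 < R) (a : ℝ) (ha : 0 < a) (ha1 : a < 1)
    (μs : ℕ → Measure (EuclideanSpace ℝ (Fin (n + 1))))
    (μ : Measure (EuclideanSpace ℝ (Fin (n + 1))))
    [∀ i, IsFiniteMeasure (μs i)] [IsFiniteMeasure μ] (hμ : μ ≠ 0)
    (hsupp_i : ∀ i, μs i (closedBall (0 : EuclideanSpace ℝ (Fin (n + 1))) R)ᶜ = 0)
    (hsupp : μ (closedBall (0 : EuclideanSpace ℝ (Fin (n + 1))) R)ᶜ = 0)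
    (hconv : ∀ g : EuclideanSpace ℝ (Fin (n + 1)) → ℝ, Continuous g → HasCompactSupport g →
      Tendsto (fun i => ∫ x, g x ∂(μs i)) atTop (nhds (∫ x, g x ∂μ))) :
    Tendsto (fun i => localEntropyR n (Ici a) (μs i)) atTop
      (nhds (localEntropyR n (Ici a) μ)) :=
  stmt_12_general n hn R a ha ha1 μs μ hsupp_i hsupp hconv
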